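/- Let γ = (γ_1, γ_2) be a composition of n with γ_1, γ_2 > 0, and let I_1 ⊆ {1,…,γ_1} and I_2 ⊆ {γ_1+1,…,n} be subsets with a := |I_1|, b := |I_2|, and a + b even. If a and b are both odd, then T_{w_γ} C_{I_1} C_{I_2} lies in [HC_n, HC_n]. If a and b are both even, then there exists ε ∈ {1, −1} such that T_{w_γ} C_{I_1} C_{I_2} − ε T_{w_γ} lies in [HC_n, HC_n]. -/

import Mathlib

noncomputable section

/-- The ring `ℤ[1/2]`. -/
abbrev Zh : Type := Localization.Away (2 : ℤ)

/-- The ring `A = ℤ[1/2][v, v⁻¹]` of Laurent polynomials over `ℤ[1/2]`. -/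
def Av : Type := LaurentPolynomial Zh

noncomputable instance : CommRing Av := inferInstanceAs (CommRing (LaurentPolynomial Zh))

/-- The indeterminate `v ∈ A`. -/
def vA : Av := (LaurentPolynomial.T 1 : LaurentPolynomial Zh)

/-- Generators of the Hecke–Clifford algebra: `T i` (0-based, for `T_{i+1}` of the paper,
`i = 0, …, n-2`) and `c j` (0-based, for `c_{j+1}`, `j = 0, …, n-1`). -/
inductive HCgen (n : ℕ) : Type
  | T : Fin (n - 1) → HCgen n
  | c : Fin n → HCgen n

/-- For a `T`-index `i`, the `c`-index of the first strand that `T_i` involves. -/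
def lo {n : ℕ} (i : Fin (n - 1)) : Fin n := ⟨i.1, by have := i.2; omega⟩

/-- For a `T`-index `i`, the `c`-index of the second strand that `T_i` involves. -/
def hi {n : ℕ} (i : Fin (n - 1)) : Fin n := ⟨i.1 + 1, by have := i.2; omega⟩

/-- The defining relations of the Hecke–Clifford algebra. -/
inductive HCrel (n : ℕ) : FreeAlgebra Av (HCgen n) → FreeAlgebra Av (HCgen n) → Prop
  | quad (i : Fin (n - 1)) :
      HCrel n ((FreeAlgebra.ι Av (HCgen.T i) - algebraMap Av (FreeAlgebra Av (HCgen n)) vA) *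
        (FreeAlgebra.ι Av (HCgen.T i) + 1)) 0
  | Tcomm (i j : Fin (n - 1)) (h : i.1 + 1 < j.1) :
      HCrel n (FreeAlgebra.ι Av (HCgen.T i) * FreeAlgebra.ι Av (HCgen.T j))
        (FreeAlgebra.ι Av (HCgen.T j) * FreeAlgebra.ι Av (HCgen.T i))
  | braid (i j : Fin (n - 1)) (h : i.1 + 1 = j.1) :
      HCrel n (FreeAlgebra.ι Av (HCgen.T i) * FreeAlgebra.ι Av (HCgen.T j) *
          FreeAlgebra.ι Av (HCgen.T i))
        (FreeAlgebra.ι Av (HCgen.T j) * FreeAlgebra.ι Av (HCgen.T i) *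
          FreeAlgebra.ι Av (HCgen.T j))
  | csq (i : Fin n) :
      HCrel n (FreeAlgebra.ι Av (HCgen.c i) * FreeAlgebra.ι Av (HCgen.c i)) 1
  | canti (i j : Fin n) (h : i ≠ j) :
      HCrel n (FreeAlgebra.ι Av (HCgen.c i) * FreeAlgebra.ι Av (HCgen.c j))
        (-(FreeAlgebra.ι Av (HCgen.c j) * FreeAlgebra.ι Av (HCgen.c i)))
  | Tccomm (i : Fin (n - 1)) (j : Fin n) (h1 : j ≠ lo i) (h2 : j ≠ hi i) :
      HCrel n (FreeAlgebra.ι Av (HCgen.T i) * FreeAlgebra.ι Av (HCgen.c j))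
        (FreeAlgebra.ι Av (HCgen.c j) * FreeAlgebra.ι Av (HCgen.T i))
  | Tc (i : Fin (n - 1)) :
      HCrel n (FreeAlgebra.ι Av (HCgen.T i) * FreeAlgebra.ι Av (HCgen.c (lo i)))
        (FreeAlgebra.ι Av (HCgen.c (hi i)) * FreeAlgebra.ι Av (HCgen.T i))

/-- The Hecke–Clifford algebra `HC_n` over `A`. -/
abbrev HC (n : ℕ) : Type := RingQuot (HCrel n)

/-- The generator `T_i` of `HC_n` (`0`-based index). -/
def Tg {n : ℕ} (i : Fin (n - 1)) : HC n :=
  RingQuot.mkAlgHom Av (HCrel n) (FreeAlgebra.ι Av (HCgen.T i))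

/-- The generator `c_j` of `HC_n` (`0`-based index). -/
def cg {n : ℕ} (j : Fin n) : HC n :=
  RingQuot.mkAlgHom Av (HCrel n) (FreeAlgebra.ι Av (HCgen.c j))

/-- `T_{i_1} ⋯ T_{i_k}` for a word `L = [i_1, …, i_k]`. -/
def Tw {n : ℕ} (L : List (Fin (n - 1))) : HC n := (L.map Tg).prod

/-- `C_I = c_{i_1} ⋯ c_{i_k}` for a subset `I = {i_1 < ⋯ < i_k}`. -/
def Cset {n : ℕ} (I : Finset (Fin n)) : HC n := ((I.sort (· ≤ ·)).map cg).prod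

/-- The `A`-submodule `[HC_n, HC_n]` spanned by all commutators. -/
def commSpan (n : ℕ) : Submodule Av (HC n) :=
  Submodule.span Av {x : HC n | ∃ a b : HC n, x = a * b - b * a}

/-- The simple transposition `s_i = (i+1, i+2)` (paper numbering) in `S_n`. -/
def sgen {n : ℕ} (i : Fin (n - 1)) : Equiv.Perm (Fin n) := Equiv.swap (lo i) (hi i)

/-- The product of the simple transpositions along a word. -/
def wordProd {n : ℕ} (L : List (Fin (n - 1))) : Equiv.Perm (Fin n) := (L.map sgen).prod

/-- The Coxeter length of a permutation: the minimal length of a word in the simple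
transpositions expressing it. -/
def plen {n : ℕ} (σ : Equiv.Perm (Fin n)) : ℕ :=
  sInf {k | ∃ L : List (Fin (n - 1)), wordProd L = σ ∧ L.length = k}

/-- `L` is a reduced expression of `σ`. -/
def IsReducedWord {n : ℕ} (σ : Equiv.Perm (Fin n)) (L : List (Fin (n - 1))) : Prop :=
  wordProd L = σ ∧ L.length = plen σ

/-- The canonical reduced word of the permutation `w_γ` attached to a composition `γ` of `n`:
the increasing list of all `0`-based `T`-indices `i ∈ {0, …, n-2}` such that `i+1` is not a
partial sum of `γ`. -/
def compWord {n : ℕ} (γ : Composition n) : List (Fin (n - 1)) :=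
  (List.finRange (n - 1)).filter (fun i => i.1 + 1 ∉ γ.blocks.scanl (· + ·) 0)

/-- The element `T_{w_γ}` of `HC_n` for a composition `γ` of `n`. -/
def Twγ {n : ℕ} (γ : Composition n) : HC n := Tw (compWord γ)

/-- The permutation `w_γ` attached to a composition `γ` of `n`. -/
def wγ {n : ℕ} (γ : Composition n) : Equiv.Perm (Fin n) := wordProd (compWord γ)

/-- A composition is a partition if its parts are weakly decreasing. -/
def IsPartitionC {n : ℕ} (γ : Composition n) : Prop := γ.blocks.Pairwise (· ≥ ·)

/-- An odd partition: a partition all of whose parts are odd. -/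
def IsOddPartitionC {n : ℕ} (γ : Composition n) : Prop :=
  IsPartitionC γ ∧ ∀ p ∈ γ.blocks, Odd p

instance {n : ℕ} (γ : Composition n) : Decidable (IsOddPartitionC γ) := by
  unfold IsOddPartitionC IsPartitionC
  infer_instance

/-- A trace function on `HC_n`: an `A`-linear map that is symmetric on products and vanishes
on the odd part, i.e. on all elements `T_σ C_I` with `|I|` odd (with `T_σ` given by any
reduced expression of `σ`). -/
def IsTraceFun {n : ℕ} (φ : HC n →ₗ[Av] Av) : Prop :=
  (∀ a b : HC n, φ (a * b) = φ (b * a)) ∧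
  ∀ L : List (Fin (n - 1)), IsReducedWord (wordProd L) L →
    ∀ I : Finset (Fin n), Odd I.card → φ (Tw L * Cset I) = 0

/-- The element `(v - 1)/2 ∈ A`. -/
def halfvm1 : Av := Ring.inverse (2 : Av) * (vA - 1)

/-!
Write `T_{w_γ} = X Y` with `X = T_1 ⋯ T_{γ₁-1}` and `Y = T_{γ₁+1} ⋯ T_{n-1}`. The two factors
commute with each other and with the Clifford generators of the other block, while
`c_{j+1} X = X c_j` inside the first block and `c_{j+1} Y = Y c_j` inside the second.

If `|I₁|` and `|I₂|` are odd, `X C_{I₁}` and `Y C_{I₂}` anticommute, so their product is half a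
commutator (`2` is invertible in `A`). If both are even, moving the last Clifford generator of a
block cyclically to the front and through `X` (or `Y`) lowers its index by one at the cost of a
sign; iterating collapses each block's Clifford word to an even power of a single `c_j`, which is
`1`, leaving `±T_{w_γ}` modulo `[HC_n, HC_n]`.
-/

section Signs

variable (R : Type*) {M : Type*} [CommRing R] [AddCommGroup M] [Module R M]

def EqUpToSign (x y : M) : Prop := ∃ k : ℕ, x = (-1 : R) ^ k • y

variable {R}

namespace EqUpToSign

theorem refl (x : M) : EqUpToSign R x x := ⟨0, by simp⟩

theorem of_eq {x y : M} (h : x = y) : EqUpToSign R x y := h ▸ refl x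

theorem trans {x y z : M} (h₁ : EqUpToSign R x y) (h₂ : EqUpToSign R y z) :
    EqUpToSign R x z := by
  obtain ⟨k, rfl⟩ := h₁
  obtain ⟨m, rfl⟩ := h₂
  exact ⟨k + m, by rw [smul_smul, pow_add]⟩

instance : @Trans M M M (EqUpToSign R) (EqUpToSign R) (EqUpToSign R) := ⟨trans⟩

theorem map {N : Type*} [AddCommGroup N] [Module R N] (f : M →ₗ[R] N) {x y : M}
    (h : EqUpToSign R x y) : EqUpToSign R (f x) (f y) := by
  obtain ⟨k, rfl⟩ := h
  exact ⟨k, map_smul f _ y⟩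

variable {A : Type*} [Ring A] [Algebra R A]

theorem mul_left {x y : A} (h : EqUpToSign R x y) (a : A) : EqUpToSign R (a * x) (a * y) := by
  obtain ⟨k, rfl⟩ := h
  exact ⟨k, mul_smul_comm _ a y⟩

theorem mul_right {x y : A} (h : EqUpToSign R x y) (a : A) : EqUpToSign R (x * a) (y * a) := by
  obtain ⟨k, rfl⟩ := h
  exact ⟨k, smul_mul_assoc _ y a⟩

end EqUpToSign

end Signs

section Relations

variable {n : ℕ}

@[simp] theorem val_lo (t : Fin (n - 1)) : (lo t).1 = t.1 := rfl

@[simp] theorem val_hi (t : Fin (n - 1)) : (hi t).1 = t.1 + 1 := rfl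

theorem cg_mul_self (i : Fin n) : cg i * cg i = 1 := by
  simpa [cg] using RingQuot.mkAlgHom_rel Av (HCrel.csq i)

theorem cg_mul_cg_of_ne {i j : Fin n} (h : i ≠ j) : cg i * cg j = (-1 : Av) • (cg j * cg i) :=
  (show cg i * cg j = -(cg j * cg i) by
    simpa [cg] using RingQuot.mkAlgHom_rel Av (HCrel.canti i j h)).trans (neg_one_smul Av _).symm

theorem commute_cg_Tg {t : Fin (n - 1)} {j : Fin n} (h₁ : j ≠ lo t) (h₂ : j ≠ hi t) :
    Commute (cg j) (Tg t) :=
  Eq.symm <| by simpa [Tg, cg] using RingQuot.mkAlgHom_rel Av (HCrel.Tccomm t j h₁ h₂)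

theorem cg_hi_mul_Tg (t : Fin (n - 1)) : cg (hi t) * Tg t = Tg t * cg (lo t) :=
  Eq.symm <| by simpa [Tg, cg] using RingQuot.mkAlgHom_rel Av (HCrel.Tc t)

theorem commute_Tg_Tg {t u : Fin (n - 1)} (h : t.1 + 1 < u.1) : Commute (Tg t) (Tg u) :=
  show Tg t * Tg u = Tg u * Tg t by simpa [Tg] using RingQuot.mkAlgHom_rel Av (HCrel.Tcomm t u h)

end Relations

section CliffordWords

variable {n : ℕ}

def Cw (l : List (Fin n)) : HC n := (l.map cg).prod

theorem Cset_eq_Cw (I : Finset (Fin n)) : Cset I = Cw (I.sort (· ≤ ·)) := rfl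

@[simp] theorem Cw_nil : Cw ([] : List (Fin n)) = 1 := rfl

@[simp] theorem Cw_cons (j : Fin n) (l : List (Fin n)) : Cw (j :: l) = cg j * Cw l := by
  simp [Cw]

@[simp] theorem Cw_append (l m : List (Fin n)) : Cw (l ++ m) = Cw l * Cw m := by
  simp [Cw]

theorem Cw_replicate (k : ℕ) (j : Fin n) : Cw (List.replicate k j) = cg j ^ k := by
  simp [Cw]

theorem cg_pow_of_even {k : ℕ} (hk : Even k) (j : Fin n) : cg j ^ k = 1 := by
  obtain ⟨m, rfl⟩ := hk
  rw [← two_mul, pow_mul, sq, cg_mul_self, one_pow]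

theorem eqUpToSign_cg_mul_cg (i j : Fin n) : EqUpToSign Av (cg i * cg j) (cg j * cg i) := by
  by_cases h : i = j
  · subst h
    exact .refl _
  · exact ⟨1, by rw [pow_one, cg_mul_cg_of_ne h]⟩

theorem eqUpToSign_Cw_of_perm {l l' : List (Fin n)} (h : l.Perm l') :
    EqUpToSign Av (Cw l) (Cw l') := by
  induction h with
  | nil => exact .refl _
  | cons j _ ih => simpa using ih.mul_left (cg j)
  | swap i j l => simpa [← mul_assoc] using (eqUpToSign_cg_mul_cg j i).mul_right (Cw l)
  | trans _ _ ih₁ ih₂ => exact ih₁.trans ih₂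

theorem eqUpToSign_cg_mul_Cw (j : Fin n) (l : List (Fin n)) :
    EqUpToSign Av (cg j * Cw l) (Cw l * cg j) := by
  simpa using eqUpToSign_Cw_of_perm (List.perm_append_singleton j l).symm

theorem cg_mul_Cw_of_notMem {j : Fin n} {l : List (Fin n)} (h : j ∉ l) :
    cg j * Cw l = (-1 : Av) ^ l.length • (Cw l * cg j) := by
  induction l with
  | nil => simp
  | cons i l ih =>
    rw [List.mem_cons, not_or] at h
    rw [Cw_cons, ← mul_assoc, cg_mul_cg_of_ne h.1, smul_mul_assoc, mul_assoc, ih h.2,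
      mul_smul_comm, smul_smul, List.length_cons, pow_succ', mul_assoc]

theorem Cw_mul_Cw_of_disjoint {l m : List (Fin n)} (h : ∀ j ∈ l, j ∉ m) :
    Cw l * Cw m = (-1 : Av) ^ (l.length * m.length) • (Cw m * Cw l) := by
  induction l with
  | nil => simp
  | cons i l ih =>
    rw [Cw_cons, mul_assoc, ih fun j hj => h j (by simp [hj]), mul_smul_comm, ← mul_assoc,
      cg_mul_Cw_of_notMem (h i (by simp)), smul_mul_assoc, smul_smul, ← pow_add, mul_assoc,
      List.length_cons, add_one_mul, add_comm]

end CliffordWords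

section TWords

variable {n : ℕ}

@[simp] theorem Tw_cons (t : Fin (n - 1)) (L : List (Fin (n - 1))) : Tw (t :: L) = Tg t * Tw L := by
  simp [Tw]

@[simp] theorem Tw_append (L M : List (Fin (n - 1))) : Tw (L ++ M) = Tw L * Tw M := by
  simp [Tw]

theorem commute_cg_Tw {j : Fin n} {L : List (Fin (n - 1))}
    (h : ∀ t ∈ L, j ≠ lo t ∧ j ≠ hi t) : Commute (cg j) (Tw L) :=
  Commute.list_prod_right _ _ <| by
    simpa using fun t ht => commute_cg_Tg (h t ht).1 (h t ht).2

theorem cg_hi_mul_Tw {L : List (Fin (n - 1))} (hL : L.Pairwise (· < ·)) {t : Fin (n - 1)}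
    (ht : t ∈ L) : cg (hi t) * Tw L = Tw L * cg (lo t) := by
  obtain ⟨L₁, L₂, rfl⟩ := List.append_of_mem ht
  rw [List.pairwise_append, List.pairwise_cons] at hL
  have h₁ : Commute (cg (hi t)) (Tw L₁) := commute_cg_Tw fun u hu => by
    have := Fin.lt_def.mp (hL.2.2 u hu t (by simp))
    simp only [ne_eq, Fin.ext_iff, val_lo, val_hi]
    omega
  have h₂ : Commute (cg (lo t)) (Tw L₂) := commute_cg_Tw fun u hu => by
    have := Fin.lt_def.mp (hL.2.1.1 u hu)
    simp only [ne_eq, Fin.ext_iff, val_lo, val_hi]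
    omega
  rw [Tw_append, Tw_cons, ← mul_assoc, h₁.eq, mul_assoc, ← mul_assoc (cg _), cg_hi_mul_Tg,
    mul_assoc, h₂.eq]
  simp only [mul_assoc]

theorem commute_Tw_Tw {L M : List (Fin (n - 1))} (h : ∀ t ∈ L, ∀ u ∈ M, t.1 + 1 < u.1) :
    Commute (Tw L) (Tw M) := by
  refine Commute.list_prod_left _ _ fun x hx => Commute.list_prod_right _ _ fun y hy => ?_
  obtain ⟨t, ht, rfl⟩ := List.mem_map.mp hx
  obtain ⟨u, hu, rfl⟩ := List.mem_map.mp hy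
  exact commute_Tg_Tg (h t ht u hu)

end TWords

section CycleWords

variable {n : ℕ}

-- `T_{a+1} ⋯ T_{b-1}` in the paper's numbering: the reduced word of the cycle `(a+1, …, b)`.
def cycleWord (n a b : ℕ) : List (Fin (n - 1)) :=
  (List.finRange (n - 1)).filter fun t => a ≤ t.1 ∧ t.1 + 1 < b

theorem mem_cycleWord {a b : ℕ} {t : Fin (n - 1)} :
    t ∈ cycleWord n a b ↔ a ≤ t.1 ∧ t.1 + 1 < b := by
  simp [cycleWord]

theorem cycleWord_pairwise (a b : ℕ) : (cycleWord n a b).Pairwise (· < ·) :=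
  (List.pairwise_lt_finRange _).filter _

theorem cg_hi_mul_Tw_cycleWord {a b : ℕ} {t : Fin (n - 1)} (h₁ : a ≤ t.1) (h₂ : t.1 + 1 < b) :
    cg (hi t) * Tw (cycleWord n a b) = Tw (cycleWord n a b) * cg (lo t) :=
  cg_hi_mul_Tw (cycleWord_pairwise a b) (mem_cycleWord.mpr ⟨h₁, h₂⟩)

theorem commute_cg_Tw_cycleWord {a b : ℕ} {j : Fin n} (h : j.1 < a ∨ b ≤ j.1) :
    Commute (cg j) (Tw (cycleWord n a b)) :=
  commute_cg_Tw fun t ht => by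
    rw [mem_cycleWord] at ht
    simp only [ne_eq, Fin.ext_iff, val_lo, val_hi]
    omega

theorem commute_Tw_cycleWord {a b a' b' : ℕ} (h : b ≤ a') :
    Commute (Tw (cycleWord n a b)) (Tw (cycleWord n a' b')) :=
  commute_Tw_Tw fun t ht u hu => by
    rw [mem_cycleWord] at ht hu
    omega

theorem compWord_eq_append {γ : Composition n} {g1 g2 : ℕ} (hγ : γ.blocks = [g1, g2]) :
    compWord γ = cycleWord n 0 g1 ++ cycleWord n g1 n := by
  have hn : g1 + g2 = n := by simpa [hγ] using γ.blocks_sum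
  refine ((List.pairwise_lt_finRange _).filter _).eq_of_mem_iff ?_ fun t => ?_
  · refine List.pairwise_append.mpr ⟨cycleWord_pairwise _ _, cycleWord_pairwise _ _, ?_⟩
    intro t ht u hu
    rw [mem_cycleWord] at ht hu
    exact Fin.lt_def.mpr (by omega)
  · have := t.2
    simp [hγ, mem_cycleWord]
    omega

theorem Twγ_eq_mul {γ : Composition n} {g1 g2 : ℕ} (hγ : γ.blocks = [g1, g2]) :
    Twγ γ = Tw (cycleWord n 0 g1) * Tw (cycleWord n g1 n) := by
  rw [Twγ, compWord_eq_append hγ, Tw_append]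

end CycleWords

section Cocenter

variable {n : ℕ}

def toCocenter (n : ℕ) : HC n →ₗ[Av] HC n ⧸ commSpan n := (commSpan n).mkQ

theorem toCocenter_eq_iff {x y : HC n} : toCocenter n x = toCocenter n y ↔ x - y ∈ commSpan n :=
  Submodule.Quotient.eq _

theorem toCocenter_mul_comm (a b : HC n) : toCocenter n (a * b) = toCocenter n (b * a) :=
  toCocenter_eq_iff.mpr (Submodule.subset_span ⟨a, b, rfl⟩)

theorem isUnit_two_Av : IsUnit (2 : Av) := by
  show IsUnit (2 : LaurentPolynomial Zh)
  have : IsUnit (2 : Zh) := by simpa using IsLocalization.Away.algebraMap_isUnit (S := Zh) (2 : ℤ)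
  rw [← map_ofNat LaurentPolynomial.C 2]
  exact this.map _

theorem mul_mem_commSpan_of_anticomm {a b : HC n} (h : a * b = (-1 : Av) • (b * a)) :
    a * b ∈ commSpan n := by
  rw [← Submodule.smul_mem_iff_of_isUnit _ isUnit_two_Av]
  have : (2 : Av) • (a * b) = a * b - b * a := by
    rw [h]
    module
  exact this ▸ Submodule.subset_span ⟨a, b, rfl⟩

end Cocenter

section Reduction

variable {n : ℕ}

theorem toCocenter_mul_Cw_eqUpToSign (s : Fin n) (e : ℕ) {D B : HC n}
    (hD : ∀ j : Fin n, s ≤ j → j.1 < e → EqUpToSign Av (cg j * D) (D * cg j))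
    (hB : ∀ t : Fin (n - 1), s ≤ lo t → (hi t).1 < e → cg (hi t) * B = B * cg (lo t))
    (l : List (Fin n)) (hl : ∀ j ∈ l, s ≤ j ∧ j.1 < e) :
    EqUpToSign Av (toCocenter n (D * B * Cw l)) (toCocenter n (D * B * cg s ^ l.length)) := by
  induction hN : (l.map Fin.val).sum using Nat.strong_induction_on generalizing l with
  | _ N ih =>
  by_cases hs : ∀ j ∈ l, j = s
  · rw [← Cw_replicate, ← List.eq_replicate_iff.mpr ⟨rfl, hs⟩]
    exact .refl _
  push Not at hs
  obtain ⟨j, hj, hjs⟩ := hs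
  have hsj : s.1 < j.1 := Fin.lt_def.mp (lt_of_le_of_ne (hl j hj).1 (Ne.symm hjs))
  set t : Fin (n - 1) := ⟨j.1 - 1, by omega⟩
  have hjt : hi t = j := Fin.ext (by simp [t]; omega)
  have hperm : l.Perm (j :: l.erase j) := List.perm_cons_erase hj
  have hB' : cg j * B = B * cg (lo t) :=
    hjt ▸ hB t (Fin.le_def.mpr (by simp [t]; omega)) (hjt ▸ (hl j hj).2)
  set l' := lo t :: l.erase j
  -- Cycle `c_j` from the end of the word around to the front, then move it past `D` and `B`.
  have step : EqUpToSign Av (toCocenter n (D * B * Cw l)) (toCocenter n (D * B * Cw l')) :=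
    calc toCocenter n (D * B * Cw l)
      EqUpToSign Av _ (toCocenter n (D * B * Cw (l.erase j ++ [j]))) :=
        ((eqUpToSign_Cw_of_perm (hperm.trans (List.perm_append_singleton _ _).symm)).mul_left
          _).map _
      _ = toCocenter n (cg j * D * (B * Cw (l.erase j))) := by
        rw [Cw_append, Cw_cons, Cw_nil, mul_one, ← mul_assoc, toCocenter_mul_comm]
        simp only [mul_assoc]
      EqUpToSign Av _ (toCocenter n (D * cg j * (B * Cw (l.erase j)))) :=
        ((hD j (hl j hj).1 (hl j hj).2).mul_right _).map _
      _ = toCocenter n (D * B * Cw l') := by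
        rw [mul_assoc D, ← mul_assoc (cg j), hB']
        simp only [l', Cw_cons, mul_assoc]
  have hlen : l'.length = l.length := by simp [l', hperm.length_eq]
  have hsum : (l'.map Fin.val).sum < N := by
    have := (hperm.map Fin.val).sum_eq
    simp only [l', List.map_cons, List.sum_cons, val_lo, t] at this ⊢
    omega
  have hl' : ∀ x ∈ l', s ≤ x ∧ x.1 < e := by
    simp only [l', List.mem_cons]
    rintro x (rfl | hx)
    · exact ⟨Fin.le_def.mpr (by simp [t]; omega), by simp [t]; have := (hl j hj).2; omega⟩
    · exact hl x (List.mem_of_mem_erase hx)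
  exact step.trans (hlen ▸ ih _ hsum l' hl' rfl)

end Reduction

section TwoCycles

variable {n g1 g2 : ℕ} {γ : Composition n} {I1 I2 : Finset (Fin n)}

theorem commute_Cset {I : Finset (Fin n)} {x : HC n} (h : ∀ i ∈ I, Commute (cg i) x) :
    Commute (Cset I) x :=
  Commute.list_prod_left _ _ <| by simpa using h

theorem Twγ_mul_Cset_mul_Cset (hγ : γ.blocks = [g1, g2]) (hI1 : ∀ i ∈ I1, (i : ℕ) < g1) :
    Twγ γ * Cset I1 * Cset I2 =
      Tw (cycleWord n 0 g1) * Cset I1 * (Tw (cycleWord n g1 n) * Cset I2) := by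
  have : Commute (Cset I1) (Tw (cycleWord n g1 n)) :=
    commute_Cset fun i hi => commute_cg_Tw_cycleWord (Or.inl (hI1 i hi))
  rw [Twγ_eq_mul hγ, mul_assoc (Tw _), ← this.eq]
  simp only [mul_assoc]

theorem Twγ_mul_Cset_mul_Cset_mem_commSpan (hγ : γ.blocks = [g1, g2])
    (hI1 : ∀ i ∈ I1, (i : ℕ) < g1) (hI2 : ∀ i ∈ I2, g1 ≤ (i : ℕ))
    (h1 : Odd I1.card) (h2 : Odd I2.card) :
    Twγ γ * Cset I1 * Cset I2 ∈ commSpan n := by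
  set X := Tw (cycleWord n 0 g1)
  set Y := Tw (cycleWord n g1 n)
  have hXY : Commute X Y := commute_Tw_cycleWord le_rfl
  have hC1Y : Commute (Cset I1) Y :=
    commute_Cset fun i hi => commute_cg_Tw_cycleWord (Or.inl (hI1 i hi))
  have hC2X : Commute (Cset I2) X :=
    commute_Cset fun i hi => commute_cg_Tw_cycleWord (Or.inr (hI2 i hi))
  have hC1C2 : Cset I1 * Cset I2 = (-1 : Av) • (Cset I2 * Cset I1) := by
    rw [Cset_eq_Cw, Cset_eq_Cw, Cw_mul_Cw_of_disjoint, Finset.length_sort, Finset.length_sort,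
      (h1.mul h2).neg_one_pow]
    simp only [Finset.mem_sort]
    exact fun i hi hi' => by have := hI1 i hi; have := hI2 i hi'; omega
  rw [Twγ_mul_Cset_mul_Cset hγ hI1]
  apply mul_mem_commSpan_of_anticomm
  calc X * Cset I1 * (Y * Cset I2)
    _ = X * Y * (Cset I1 * Cset I2) := by
      rw [mul_assoc, ← mul_assoc (Cset I1), hC1Y.eq]
      simp only [mul_assoc]
    _ = (-1 : Av) • (Y * Cset I2 * (X * Cset I1)) := by
      rw [hC1C2, mul_smul_comm, hXY.eq, mul_assoc, ← mul_assoc X, ← hC2X.eq]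
      simp only [mul_assoc]

theorem toCocenter_Twγ_mul_Cset_mul_Cset_eqUpToSign (hγ : γ.blocks = [g1, g2])
    (hI1 : ∀ i ∈ I1, (i : ℕ) < g1) (hI2 : ∀ i ∈ I2, g1 ≤ (i : ℕ))
    (h1 : Even I1.card) (h2 : Even I2.card) :
    EqUpToSign Av (toCocenter n (Twγ γ * Cset I1 * Cset I2)) (toCocenter n (Twγ γ)) := by
  have hg1 : 0 < g1 := γ.blocks_pos (by simp [hγ])
  have hg2 : 0 < g2 := γ.blocks_pos (by simp [hγ])
  have hn : g1 + g2 = n := by simpa [hγ] using γ.blocks_sum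
  set X := Tw (cycleWord n 0 g1)
  set Y := Tw (cycleWord n g1 n)
  calc toCocenter n (Twγ γ * Cset I1 * Cset I2)
    _ = toCocenter n (X * Cset I1 * Y * Cw (I2.sort (· ≤ ·))) := by
      rw [Twγ_mul_Cset_mul_Cset hγ hI1, Cset_eq_Cw I2, mul_assoc (X * Cset I1)]
    EqUpToSign Av _ (toCocenter n (X * Cset I1 * Y * cg ⟨g1, by omega⟩ ^ I2.card)) := by
      rw [← Finset.length_sort (· ≤ ·)]
      refine toCocenter_mul_Cw_eqUpToSign _ n (fun j hj _ => ?_) (fun t ht htn => ?_) _ ?_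
      · rw [Cset_eq_Cw, ← mul_assoc, (commute_cg_Tw_cycleWord (Or.inr (Fin.le_def.mp hj))).eq,
          mul_assoc, mul_assoc]
        exact (eqUpToSign_cg_mul_Cw j _).mul_left X
      · exact cg_hi_mul_Tw_cycleWord (Fin.le_def.mp ht) htn
      · simp only [Finset.mem_sort]
        exact fun j hj => ⟨Fin.le_def.mpr (hI2 j hj), j.2⟩
    _ = toCocenter n (Y * X * Cw (I1.sort (· ≤ ·))) := by
      rw [cg_pow_of_even h2, mul_one, toCocenter_mul_comm, Cset_eq_Cw, mul_assoc]
    EqUpToSign Av _ (toCocenter n (Y * X * cg ⟨0, by omega⟩ ^ I1.card)) := by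
      rw [← Finset.length_sort (· ≤ ·)]
      refine toCocenter_mul_Cw_eqUpToSign _ g1 (fun j _ hj => ?_) (fun t _ ht => ?_) _ ?_
      · exact .of_eq (commute_cg_Tw_cycleWord (Or.inl hj)).eq
      · exact cg_hi_mul_Tw_cycleWord (Nat.zero_le _) (by simpa using ht)
      · simp only [Finset.mem_sort]
        exact fun j hj => ⟨Nat.zero_le _, hI1 j hj⟩
    _ = toCocenter n (Twγ γ) := by
      rw [cg_pow_of_even h1, mul_one, toCocenter_mul_comm, Twγ_eq_mul hγ]

end TwoCycles

theorem statement_6_general (n : ℕ) (γ : Composition n) (g1 g2 : ℕ)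
    (hγ : γ.blocks = [g1, g2]) (I1 I2 : Finset (Fin n))
    (hI1 : ∀ i ∈ I1, (i : ℕ) < g1) (hI2 : ∀ i ∈ I2, g1 ≤ (i : ℕ)) :
    (Odd I1.card → Odd I2.card → Twγ γ * Cset I1 * Cset I2 ∈ commSpan n) ∧
    (Even I1.card → Even I2.card →
      ∃ ε : Av, (ε = 1 ∨ ε = -1) ∧
        Twγ γ * Cset I1 * Cset I2 - ε • Twγ γ ∈ commSpan n) := by
  refine ⟨Twγ_mul_Cset_mul_Cset_mem_commSpan hγ hI1 hI2, fun h1 h2 => ?_⟩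
  obtain ⟨k, hk⟩ := toCocenter_Twγ_mul_Cset_mul_Cset_eqUpToSign hγ hI1 hI2 h1 h2
  exact ⟨(-1) ^ k, neg_one_pow_eq_or Av k, toCocenter_eq_iff.mp (hk.trans (map_smul _ _ _).symm)⟩

/-- For a two-part composition `γ = (γ₁, γ₂)` of `n` and subsets
`I₁ ⊆ {1,…,γ₁}`, `I₂ ⊆ {γ₁+1,…,n}` with `|I₁| + |I₂|` even:
if `|I₁|, |I₂|` are odd then `T_{w_γ} C_{I₁} C_{I₂} ≡ 0`, and if they are even then
`T_{w_γ} C_{I₁} C_{I₂} ≡ ± T_{w_γ}`, modulo `[HC_n, HC_n]`. -/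
theorem statement_6 (n : ℕ) (hn : 1 ≤ n) (γ : Composition n) (g1 g2 : ℕ)
    (hγ : γ.blocks = [g1, g2]) (I1 I2 : Finset (Fin n))
    (hI1 : ∀ i ∈ I1, (i : ℕ) < g1) (hI2 : ∀ i ∈ I2, g1 ≤ (i : ℕ))
    (hpar : Even (I1.card + I2.card)) :
    (Odd I1.card → Odd I2.card → Twγ γ * Cset I1 * Cset I2 ∈ commSpan n) ∧
    (Even I1.card → Even I2.card →
      ∃ ε : Av, (ε = 1 ∨ ε = -1) ∧
        Twγ γ * Cset I1 * Cset I2 - ε • Twγ γ ∈ commSpan n) :=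
  statement_6_general n γ g1 g2 hγ I1 I2 hI1 hI2

end
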